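/- Let n ≥ 2 be an integer and define, for t > 0, φ_{2m}(t) = Σ_{j=0}^{m−1} C(m−1,j) (−1)^j (2j)! (1 − e^{−t} p_{2j}(t)) / t^{2j+1} for m ≥ 1, where C(m−1,j) is a binomial coefficient and p_k is the Taylor polynomial of e^t of order k centered at t = 0. Then for every t > 0, t·φ_{2n}'(t) + (2n−1)·φ_{2n}(t) = (2n−2)·φ_{2n−2}(t). -/

import Mathlib

open scoped Nat

/-- `taylorExp k t` is the Taylor polynomial of `e^t` of order `k` centered at `0`. -/
noncomputable def taylorExp (k : ℕ) (t : ℝ) : ℝ :=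
  ∑ i ∈ Finset.range (k + 1), t ^ i / (i ! : ℝ)

/-- The function `φ_{2m}` of the paper (for `m ≥ 1`). -/
noncomputable def phiEven (m : ℕ) (t : ℝ) : ℝ :=
  ∑ j ∈ Finset.range m,
    ((m - 1).choose j : ℝ) * (-1 : ℝ) ^ j * ((2*j)! : ℝ) *
      (1 - Real.exp (-t) * taylorExp (2*j) t) / t ^ (2*j + 1)

/-!
With `g_k(t) = k! (1 - e^{-t} p_k(t)) / t^{k+1}`, the identity `(1 - e^{-t} p_k)' = e^{-t} t^k / k!`
gives the first-order equation `t g_k' = e^{-t} - (k+1) g_k`. Since `φ_{2n} = Σ_j C(n-1,j) (-1)^j g_{2j}`,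
`t φ_{2n}' + (2n-1) φ_{2n} = Σ_j C(n-1,j) (-1)^j (e^{-t} + 2(n-1-j) g_{2j})`. The `e^{-t}` terms cancel
because the alternating binomial sum vanishes for `n ≥ 2`, and `C(n-1,j) (n-1-j) = (n-1) C(n-2,j)`
turns the rest into `(2n-2) φ_{2n-2}`.
-/

open Finset Real

theorem sum_range_choose_mul_neg_one_pow {R : Type*} [CommRing R] {m : ℕ} (hm : m ≠ 0) :
    ∑ j ∈ range (m + 1), (m.choose j : R) * (-1) ^ j = 0 := by
  have h := add_pow (-1 : R) 1 m
  simp only [neg_add_cancel, zero_pow hm, one_pow, mul_one] at h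
  rw [h]
  exact sum_congr rfl fun j _ => mul_comm _ _

theorem sum_range_choose_mul_sub_mul {R : Type*} [CommRing R] (m : ℕ) (g : ℕ → R) :
    ∑ j ∈ range (m + 2), ((m + 1).choose j : R) * ((m : R) + 1 - j) * g j
      = ((m : R) + 1) * ∑ j ∈ range (m + 1), (m.choose j : R) * g j := by
  rw [sum_range_succ, Nat.cast_add_one, sub_self, mul_zero, zero_mul, add_zero, mul_sum]
  refine sum_congr rfl fun j hj => ?_
  have hjm : j ≤ m + 1 := by have := mem_range.1 hj; omega
  have h := congrArg (Nat.cast : ℕ → R) (Nat.choose_mul_succ_eq m j)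
  push_cast [Nat.cast_sub hjm] at h
  linear_combination (-g j) * h

theorem taylorExp_succ (k : ℕ) (t : ℝ) :
    taylorExp (k + 1) t = taylorExp k t + t ^ (k + 1) / ((k + 1)! : ℝ) :=
  sum_range_succ _ _

theorem hasDerivAt_taylorExp (k : ℕ) (t : ℝ) :
    HasDerivAt (taylorExp k) (taylorExp k t - t ^ k / (k ! : ℝ)) t := by
  induction k with
  | zero =>
    have h0 : taylorExp 0 = fun _ => 1 := funext fun s => by simp [taylorExp]
    rw [h0]
    simpa using hasDerivAt_const t (1 : ℝ)
  | succ k ih =>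
    have hpow := (hasDerivAt_pow (k + 1) t).div_const ((k + 1)! : ℝ)
    refine ((ih.add hpow).congr_deriv ?_).congr_of_eventuallyEq
      (Filter.Eventually.of_forall fun s => taylorExp_succ k s)
    rw [taylorExp_succ, Nat.factorial_succ]
    push_cast
    field_simp
    ring

theorem hasDerivAt_one_sub_exp_neg_mul_taylorExp (k : ℕ) (t : ℝ) :
    HasDerivAt (fun s => 1 - exp (-s) * taylorExp k s) (exp (-t) * t ^ k / (k ! : ℝ)) t := by
  refine (((hasDerivAt_neg t).exp.mul (hasDerivAt_taylorExp k t)).const_sub 1).congr_deriv ?_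
  ring

noncomputable def scaledExpRemainder (k : ℕ) (t : ℝ) : ℝ :=
  k ! * (1 - exp (-t) * taylorExp k t) / t ^ (k + 1)

theorem hasDerivAt_scaledExpRemainder (k : ℕ) {t : ℝ} (ht : t ≠ 0) :
    HasDerivAt (scaledExpRemainder k)
      ((exp (-t) - (k + 1) * scaledExpRemainder k t) / t) t := by
  have h := ((hasDerivAt_one_sub_exp_neg_mul_taylorExp k t).const_mul (k ! : ℝ)).div
    (hasDerivAt_pow (k + 1) t) (pow_ne_zero _ ht)
  refine h.congr_deriv ?_
  simp only [scaledExpRemainder]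
  field_simp
  push_cast
  ring

theorem phiEven_eq_sum (m : ℕ) :
    phiEven m = fun t =>
      ∑ j ∈ range m, ((m - 1).choose j : ℝ) * (-1) ^ j * scaledExpRemainder (2 * j) t := by
  funext t
  exact sum_congr rfl fun j _ => by simp only [scaledExpRemainder]; ring

theorem mul_deriv_phiEven (m : ℕ) {t : ℝ} (ht : t ≠ 0) :
    t * deriv (phiEven m) t
      = ∑ j ∈ range m, ((m - 1).choose j : ℝ) * (-1) ^ j
          * (exp (-t) - (2 * j + 1) * scaledExpRemainder (2 * j) t) := by
  rw [phiEven_eq_sum, deriv_fun_sum fun j _ =>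
    ((hasDerivAt_scaledExpRemainder (2 * j) ht).const_mul _).differentiableAt, mul_sum]
  refine sum_congr rfl fun j _ => ?_
  rw [deriv_const_mul _ (hasDerivAt_scaledExpRemainder (2 * j) ht).differentiableAt,
    (hasDerivAt_scaledExpRemainder (2 * j) ht).deriv]
  push_cast
  field_simp

theorem stmt16 (n : ℕ) (hn : 2 ≤ n) :
    ∀ t : ℝ, 0 < t →
      t * deriv (phiEven n) t + (2 * (n : ℝ) - 1) * phiEven n t
        = (2 * (n : ℝ) - 2) * phiEven (n - 1) t := by
  obtain ⟨m, rfl⟩ : ∃ m, n = m + 2 := ⟨n - 2, by omega⟩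
  intro t ht
  set g := fun j : ℕ => (-1 : ℝ) ^ j * scaledExpRemainder (2 * j) t
  rw [mul_deriv_phiEven _ ht.ne', phiEven_eq_sum, phiEven_eq_sum]
  simp only [show m + 2 - 1 = m + 1 by omega, Nat.add_sub_cancel]
  calc _ = exp (-t) * ∑ j ∈ range (m + 2), ((m + 1).choose j : ℝ) * (-1) ^ j
        + 2 * ∑ j ∈ range (m + 2), ((m + 1).choose j : ℝ) * ((m : ℝ) + 1 - j) * g j := by
        simp only [mul_sum, ← sum_add_distrib]
        exact sum_congr rfl fun j _ => by push_cast; ring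
    _ = 2 * ((m + 1) * ∑ j ∈ range (m + 1), (m.choose j : ℝ) * g j) := by
        rw [sum_range_choose_mul_neg_one_pow (m.succ_ne_zero), sum_range_choose_mul_sub_mul]
        ring
    _ = _ := by
        simp only [mul_sum]
        exact sum_congr rfl fun j _ => by push_cast; ring
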